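/- arXiv:2006.14986 — 3 statements merged into one kernel-verified Lean document; each statement's English description precedes it below -/
import Mathlib

section
/- Let (b_1,...,b_k) and (c_1,...,c_l) be linear-dual strings with k + l ≥ 2, let x ≥ 1 be an integer, and let [b_1,...,b_k] = p/q in lowest terms. Then the Hirzebruch–Jung continued fractions satisfy [b_1,...,b_k, x+1, c_l,...,c_1] = (x p²)/(x p q + 1) and [c_1,...,c_l, x+1, b_k,...,b_1] = (x p²)/(x p² - x p q + 1). -/
/-- Numerator and denominator of the Hirzebruch–Jung continued fraction
`[a_1,...,a_n] = a_1 - 1/(a_2 - 1/(⋯ - 1/a_n))`; the empty fraction is `1/0`. -/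
def hj : List ℕ → ℤ × ℤ
  | [] => (1, 0)
  | a :: l => ((a : ℤ) * (hj l).1 - (hj l).2, (hj l).1)

def hjNum (l : List ℕ) : ℤ := (hj l).1

def hjDen (l : List ℕ) : ℤ := (hj l).2

/-- `(b_1,...,b_k)` and `(c_1,...,c_l)` are linear-dual strings: both consist of
integers `≥ 2`, and if `[b_1,...,b_k] = p/q` then `[c_1,...,c_l] = p/(p-q)`
(Riemenschneider duality, equivalent to the `2^{[m]}/3+n` normal-form description). -/
def IsLinearDual (b c : List ℕ) : Prop :=
  (∀ x ∈ b, 2 ≤ x) ∧ (∀ x ∈ c, 2 ≤ x) ∧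
    hjNum c = hjNum b ∧ hjDen b + hjDen c = hjNum b
/-!
`hj l` is the first column of the continuant matrix `M(l) = ∏ [[aᵢ, -1], [1, 0]]`, which has
determinant `1` and satisfies `M(l.reverse) = S M(l)ᵀ S` with `S = diag(1, -1)`. Gluing `b`,
`x + 1` and `c.reverse` therefore expresses all four quantities through `p`, `q` and the `(0, 1)`
entries of `M(b)` and `M(c)`. Up to sign these entries are the denominators `q'` and `q''` of the
reversed strings, so they lie in `[1, p)`; the determinants give `q q' ≡ 1` and
`(p - q) q'' ≡ 1 (mod p)`, hence `q' + q'' ≡ 0`, i.e. `q' + q'' = p`, and this is the one fact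
about duality the formulas need.
-/

open Matrix

@[simp] lemma hjNum_nil : hjNum [] = 1 := rfl

@[simp] lemma hjDen_nil : hjDen [] = 0 := rfl

@[simp] lemma hjNum_cons (a : ℕ) (l : List ℕ) : hjNum (a :: l) = a * hjNum l - hjDen l := rfl

@[simp] lemma hjDen_cons (a : ℕ) (l : List ℕ) : hjDen (a :: l) = hjNum l := rfl

def hjStep (a : ℕ) : Matrix (Fin 2) (Fin 2) ℤ := !![(a : ℤ), -1; 1, 0]

def hjMat (l : List ℕ) : Matrix (Fin 2) (Fin 2) ℤ := (l.map hjStep).prod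

def signFlip : Matrix (Fin 2) (Fin 2) ℤ := diagonal ![1, -1]

@[simp] lemma hjMat_nil : hjMat [] = 1 := rfl

@[simp] lemma hjMat_cons (a : ℕ) (l : List ℕ) : hjMat (a :: l) = hjStep a * hjMat l := rfl

@[simp] lemma hjMat_append (l m : List ℕ) : hjMat (l ++ m) = hjMat l * hjMat m := by
  simp [hjMat]

lemma det_hjMat (l : List ℕ) : (hjMat l).det = 1 := by
  induction l with
  | nil => simp
  | cons a l ih => rw [hjMat_cons, det_mul, ih, hjStep, det_fin_two_of]; ring

lemma hj_eq_hjMat (l : List ℕ) : hj l = (hjMat l 0 0, hjMat l 1 0) := by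
  induction l with
  | nil => simp [hj]
  | cons a l ih => simp [hj, ih, hjStep, mul_apply, Fin.sum_univ_two]; ring

lemma hjMat_zero_zero (l : List ℕ) : hjMat l 0 0 = hjNum l := by simp [hjNum, hj_eq_hjMat]

lemma hjMat_one_zero (l : List ℕ) : hjMat l 1 0 = hjDen l := by simp [hjDen, hj_eq_hjMat]

lemma signFlip_mul_self : signFlip * signFlip = 1 := by
  rw [signFlip, diagonal_mul_diagonal, ← diagonal_one]
  congr 1
  ext i
  fin_cases i <;> rfl

lemma signFlip_mul_hjStep (a : ℕ) : signFlip * hjStep a = (hjStep a)ᵀ * signFlip := by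
  ext i j
  fin_cases i <;> fin_cases j <;> simp [hjStep, signFlip]

lemma hjMat_reverse (l : List ℕ) : hjMat l.reverse = signFlip * (hjMat l)ᵀ * signFlip := by
  induction l with
  | nil => simp [signFlip_mul_self]
  | cons a l ih =>
    simp only [List.reverse_cons, hjMat_append, ih, hjMat_cons, hjMat_nil, mul_one, transpose_mul,
      Matrix.mul_assoc, signFlip_mul_hjStep]

lemma hjNum_reverse (l : List ℕ) : hjNum l.reverse = hjNum l := by
  simp [← hjMat_zero_zero, hjMat_reverse, signFlip]

lemma hjDen_reverse (l : List ℕ) : hjDen l.reverse = -hjMat l 0 1 := by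
  simp [← hjMat_one_zero, hjMat_reverse, signFlip]

lemma hjNum_mul_sub_mul_hjDen (l : List ℕ) :
    hjNum l * hjMat l 1 1 - hjMat l 0 1 * hjDen l = 1 := by
  rw [← hjMat_zero_zero, ← hjMat_one_zero, ← det_fin_two, det_hjMat]

lemma hjDen_nonneg_and_lt_hjNum {l : List ℕ} (h : ∀ a ∈ l, 2 ≤ a) :
    0 ≤ hjDen l ∧ hjDen l < hjNum l := by
  induction l with
  | nil => simp
  | cons a l ih =>
    have ha : (2 : ℤ) ≤ a := by exact_mod_cast h a List.mem_cons_self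
    obtain ⟨h0, hlt⟩ := ih fun y hy => h y (List.mem_cons_of_mem a hy)
    simp only [hjNum_cons, hjDen_cons]
    constructor <;> nlinarith

lemma one_le_hjDen {l : List ℕ} (hne : l ≠ []) (h : ∀ a ∈ l, 2 ≤ a) : 1 ≤ hjDen l := by
  obtain ⟨a, l, rfl⟩ := List.exists_cons_of_ne_nil hne
  obtain ⟨h0, hlt⟩ := hjDen_nonneg_and_lt_hjNum fun y hy => h y (List.mem_cons_of_mem a hy)
  simp only [hjDen_cons]
  omega

lemma hjNum_append_singleton_append_reverse (l m : List ℕ) (a : ℕ) :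
    hjNum (l ++ [a] ++ m.reverse) =
      hjNum l * (a * hjNum m + hjMat m 0 1) + hjMat l 0 1 * hjNum m := by
  simp [← hjMat_zero_zero, hjMat_reverse, signFlip, hjStep, mul_apply, vecMul, dotProduct,
    Fin.sum_univ_two]

lemma hjDen_append_singleton_append_reverse (l m : List ℕ) (a : ℕ) :
    hjDen (l ++ [a] ++ m.reverse) =
      hjDen l * (a * hjNum m + hjMat m 0 1) + hjMat l 1 1 * hjNum m := by
  simp [← hjMat_zero_zero, ← hjMat_one_zero, hjMat_reverse, signFlip, hjStep, mul_apply, vecMul,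
    dotProduct, Fin.sum_univ_two]

lemma one_le_neg_hjMat_zero_one_and_lt_hjNum {l : List ℕ} (hne : l ≠ [])
    (h : ∀ a ∈ l, 2 ≤ a) :
    1 ≤ -hjMat l 0 1 ∧ -hjMat l 0 1 < hjNum l := by
  have hrev : ∀ a ∈ l.reverse, 2 ≤ a := fun a ha => h a (List.mem_reverse.1 ha)
  rw [← hjDen_reverse, ← hjNum_reverse]
  exact ⟨one_le_hjDen (List.reverse_ne_nil_iff.2 hne) hrev, (hjDen_nonneg_and_lt_hjNum hrev).2⟩

namespace IsLinearDual

variable {b c : List ℕ}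

lemma ne_nil_left (h : IsLinearDual b c) : b ≠ [] := by
  rintro rfl
  obtain ⟨-, hc, hnum, hden⟩ := h
  have := (hjDen_nonneg_and_lt_hjNum hc).2
  simp only [hjNum_nil, hjDen_nil] at hnum hden
  omega

lemma ne_nil_right (h : IsLinearDual b c) : c ≠ [] := by
  rintro rfl
  obtain ⟨hb, -, hnum, hden⟩ := h
  have := (hjDen_nonneg_and_lt_hjNum hb).2
  simp only [hjNum_nil, hjDen_nil] at hnum hden
  omega

lemma hjMat_zero_one_add (h : IsLinearDual b c) : hjMat b 0 1 + hjMat c 0 1 = -hjNum b := by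
  have hb_ne := h.ne_nil_left
  have hc_ne := h.ne_nil_right
  obtain ⟨hb, hc, hnum, hden⟩ := h
  obtain ⟨hu1, hu2⟩ := one_le_neg_hjMat_zero_one_and_lt_hjNum hb_ne hb
  obtain ⟨hv1, hv2⟩ := one_le_neg_hjMat_zero_one_and_lt_hjNum hc_ne hc
  have hdet_b := hjNum_mul_sub_mul_hjDen b
  have hdet_c := hjNum_mul_sub_mul_hjDen c
  rw [hnum] at hv2 hdet_c
  rw [show hjDen c = hjNum b - hjDen b by linarith] at hdet_c
  have hcop : IsCoprime (hjNum b) (hjDen b) := ⟨hjMat b 1 1, -hjMat b 0 1, by linarith⟩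
  have hdvd : hjNum b ∣ hjMat b 0 1 + hjMat c 0 1 + hjNum b := by
    refine hcop.dvd_of_dvd_mul_right ⟨hjMat b 1 1 - hjMat c 1 1 + hjMat c 0 1 + hjDen b, ?_⟩
    linear_combination hdet_c - hdet_b
  have := Int.eq_zero_of_abs_lt_dvd hdvd (abs_lt.2 ⟨by linarith, by linarith⟩)
  linarith

end IsLinearDual

theorem contfrac_linear_dual_formulas_general (b c : List ℕ) (h : IsLinearDual b c) (x : ℕ) :
    hjNum (b ++ [x + 1] ++ c.reverse) = (x : ℤ) * hjNum b ^ 2 ∧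
    hjDen (b ++ [x + 1] ++ c.reverse) = (x : ℤ) * hjNum b * hjDen b + 1 ∧
    hjNum (c ++ [x + 1] ++ b.reverse) = (x : ℤ) * hjNum b ^ 2 ∧
    hjDen (c ++ [x + 1] ++ b.reverse) =
      (x : ℤ) * hjNum b ^ 2 - (x : ℤ) * hjNum b * hjDen b + 1 := by
  have hsum := h.hjMat_zero_one_add
  obtain ⟨-, -, hnum, hden⟩ := h
  have hdet_b := hjNum_mul_sub_mul_hjDen b
  have hdet_c := hjNum_mul_sub_mul_hjDen c
  rw [hnum] at hdet_c
  simp only [hjNum_append_singleton_append_reverse, hjDen_append_singleton_append_reverse, hnum]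
  push_cast
  refine ⟨?_, ?_, ?_, ?_⟩
  · linear_combination hjNum b * hsum
  · linear_combination hjDen b * hsum + hdet_b
  · linear_combination hjNum b * hsum
  · linear_combination hjDen c * hsum + x * hjNum b * hden + hdet_c

/-- If `(b_1,...,b_k)` and `(c_1,...,c_l)` are linear-dual with `k + l ≥ 2`, `x ≥ 1`,
and `[b_1,...,b_k] = p/q`, then `[b_1,...,b_k, x+1, c_l,...,c_1] = xp²/(xpq+1)` and
`[c_1,...,c_l, x+1, b_k,...,b_1] = xp²/(xp² - xpq + 1)`. -/
theorem contfrac_linear_dual_formulas (b c : List ℕ) (h : IsLinearDual b c)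
    (hlen : 2 ≤ b.length + c.length) (x : ℕ) (hx : 1 ≤ x) :
    hjNum (b ++ [x + 1] ++ c.reverse) = (x : ℤ) * hjNum b ^ 2 ∧
    hjDen (b ++ [x + 1] ++ c.reverse) = (x : ℤ) * hjNum b * hjDen b + 1 ∧
    hjNum (c ++ [x + 1] ++ b.reverse) = (x : ℤ) * hjNum b ^ 2 ∧
    hjDen (c ++ [x + 1] ++ b.reverse) =
      (x : ℤ) * hjNum b ^ 2 - (x : ℤ) * hjNum b * hjDen b + 1 :=
  contfrac_linear_dual_formulas_general b c h x
end

section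
/- In ℤ^n equipped with the negative definite form given by -I_n (so e_i · e_j = -δ_{ij}), any cyclic subset S = {v_1,...,v_n} (negative or positive cyclic) consists of n linearly independent vectors. -/
section AuxLemmas

private lemma sum_ite_coe_eq {n : ℕ} (m : ℕ) (f : Fin n → ℤ) :
    (∑ j : Fin n, if (j : ℕ) = m then f j else 0)
      = if h : m < n then f ⟨m, h⟩ else 0 := by
  split
  · next h =>
    have h2 : (∑ j : Fin n, if j = (⟨m, h⟩ : Fin n) then f j else 0) = f ⟨m, h⟩ := by
      rw [Finset.sum_ite_eq']; simp
    rw [← h2]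
    apply Finset.sum_congr rfl
    intro j _
    apply if_congr _ rfl rfl
    simp [Fin.ext_iff]
  · next h =>
    apply Finset.sum_eq_zero
    intro j _
    rw [if_neg]
    intro hj
    exact h (hj ▸ j.isLt)

private lemma const_of_diffs (m : ℕ) (d : ℕ → ℤ) (h : ∀ k < m, d k = d (k + 1)) :
    ∀ k ≤ m, d k = d 0 := by
  intro k hk
  induction k with
  | zero => rfl
  | succ k ih => rw [← h k (by omega)]; exact ih (by omega)

private lemma Qid (m : ℕ) (d : ℕ → ℤ) (σ : ℤ) (hσ : σ * σ = 1) :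
    (∑ k ∈ Finset.range m, (d k - d (k + 1)) ^ 2) + (d 0 - σ * d m) ^ 2
      = 2 * (∑ k ∈ Finset.range (m + 1), (d k) ^ 2)
        - 2 * ((∑ k ∈ Finset.range m, d k * d (k + 1)) + σ * d 0 * d m) := by
  have e1 : ∑ k ∈ Finset.range m, (d k - d (k + 1)) ^ 2
      = (∑ k ∈ Finset.range m, (d k) ^ 2) + (∑ k ∈ Finset.range m, (d (k + 1)) ^ 2)
        - 2 * ∑ k ∈ Finset.range m, d k * d (k + 1) := by
    rw [← Finset.sum_add_distrib, Finset.mul_sum, ← Finset.sum_sub_distrib]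
    apply Finset.sum_congr rfl
    intros; ring
  have e2 : ∑ k ∈ Finset.range (m + 1), (d k) ^ 2
      = (∑ k ∈ Finset.range m, (d (k + 1)) ^ 2) + (d 0) ^ 2 := Finset.sum_range_succ' _ _
  have e3 : ∑ k ∈ Finset.range (m + 1), (d k) ^ 2
      = (∑ k ∈ Finset.range m, (d k) ^ 2) + (d m) ^ 2 := Finset.sum_range_succ _ _
  linear_combination e1 - e2 - e3 + (d m) ^ 2 * hσ

private lemma double_sum_eval (n : ℕ) (hn : 3 ≤ n) (c : Fin n → ℤ) (G : Fin n → Fin n → ℤ)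
    (hsym : ∀ i j, G i j = G j i) (σ : ℤ) (d : ℕ → ℤ)
    (hd : ∀ (k : ℕ) (h : k < n), d k = c ⟨k, h⟩)
    (h1 : ∀ i j : Fin n, (i : ℕ) + 1 = (j : ℕ) → G i j = 1)
    (hcor : ∀ i j : Fin n, (i : ℕ) = 0 → (j : ℕ) = n - 1 → G i j = σ)
    (h0 : ∀ i j : Fin n, (i : ℕ) + 1 < (j : ℕ) → ¬((i : ℕ) = 0 ∧ (j : ℕ) = n - 1) →
      G i j = 0) :
    ∑ i, ∑ j, c i * c j * G i j
      = (∑ i, c i * c i * G i i)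
        + 2 * ((∑ k ∈ Finset.range (n - 1), d k * d (k + 1)) + σ * d 0 * d (n - 1)) := by
  classical
  have split : ∀ i j : Fin n, c i * c j * G i j =
      (if j = i then c i * c j * G i j else 0)
      + ((if i.val < j.val then c i * c j * G i j else 0)
      + (if j.val < i.val then c i * c j * G i j else 0)) := by
    intro i j
    rcases lt_trichotomy i.val j.val with h | h | h
    · rw [if_neg (by simp [Fin.ext_iff]; omega), if_pos h, if_neg (by omega)]; ring
    · rw [if_pos (by simp [Fin.ext_iff]; omega), if_neg (by omega), if_neg (by omega)]; ring
    · rw [if_neg (by simp [Fin.ext_iff]; omega), if_neg (by omega), if_pos h]; ring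
  have hT : ∑ i, ∑ j, c i * c j * G i j
      = (∑ i, ∑ j : Fin n, if j = i then c i * c j * G i j else 0)
        + ((∑ i, ∑ j : Fin n, if i.val < j.val then c i * c j * G i j else 0)
        + (∑ i, ∑ j : Fin n, if j.val < i.val then c i * c j * G i j else 0)) := by
    rw [← Finset.sum_add_distrib, ← Finset.sum_add_distrib]
    apply Finset.sum_congr rfl
    intro i _
    rw [← Finset.sum_add_distrib, ← Finset.sum_add_distrib]
    exact Finset.sum_congr rfl fun j _ => split i j
  have hdiag : (∑ i, ∑ j : Fin n, if j = i then c i * c j * G i j else 0)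
      = ∑ i, c i * c i * G i i := by
    apply Finset.sum_congr rfl
    intro i _
    rw [Finset.sum_ite_eq' Finset.univ i (fun j => c i * c j * G i j)]
    simp
  have hlow : (∑ i, ∑ j : Fin n, if j.val < i.val then c i * c j * G i j else 0)
      = ∑ i, ∑ j : Fin n, if i.val < j.val then c i * c j * G i j else 0 := by
    rw [Finset.sum_comm]
    apply Finset.sum_congr rfl; intro i _
    apply Finset.sum_congr rfl; intro j _
    apply if_congr Iff.rfl _ rfl
    rw [hsym i j]; ring
  have hup : ∀ i j : Fin n, (if i.val < j.val then c i * c j * G i j else 0)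
      = (if j.val = i.val + 1 then c i * c j else 0)
        + (if i.val = 0 ∧ j.val = n - 1 then σ * (c i * c j) else 0) := by
    intro i j
    by_cases hj : j.val = i.val + 1
    · have hnc : ¬(i.val = 0 ∧ j.val = n - 1) := by
        rintro ⟨h1', h2'⟩
        have := j.isLt
        omega
      rw [if_pos (by omega), if_pos hj, if_neg hnc, h1 i j hj.symm]; ring
    · by_cases hcc : i.val = 0 ∧ j.val = n - 1
      · rw [if_pos (by omega), if_neg hj, if_pos hcc, hcor i j hcc.1 hcc.2]; ring
      · by_cases hlt : i.val < j.val
        · rw [if_pos hlt, if_neg hj, if_neg hcc, h0 i j (by omega) hcc]; ring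
        · rw [if_neg hlt, if_neg hj, if_neg hcc]; ring
  have hA : (∑ i, ∑ j : Fin n, if j.val = i.val + 1 then c i * c j else 0)
      = ∑ k ∈ Finset.range (n - 1), d k * d (k + 1) := by
    have step1 : ∀ i : Fin n, (∑ j : Fin n, if j.val = i.val + 1 then c i * c j else 0)
        = if i.val + 1 < n then d i.val * d (i.val + 1) else 0 := by
      intro i
      rw [sum_ite_coe_eq (i.val + 1) (fun j => c i * c j)]
      split
      · next h =>
        rw [hd _ h, hd i.val i.isLt]
      · next h => rfl
    rw [Finset.sum_congr rfl (fun i _ => step1 i)]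
    rw [Fin.sum_univ_eq_sum_range (fun k => if k + 1 < n then d k * d (k + 1) else 0) n]
    rw [← Finset.sum_subset (Finset.range_subset_range.mpr (by omega : n - 1 ≤ n))
      (fun x hx hx' => by
        rw [if_neg]
        simp only [Finset.mem_range] at hx hx'
        omega)]
    apply Finset.sum_congr rfl
    intro k hk
    rw [if_pos (by simp only [Finset.mem_range] at hk; omega)]
  have hB : (∑ i, ∑ j : Fin n, if i.val = 0 ∧ j.val = n - 1 then σ * (c i * c j) else 0)
      = σ * d 0 * d (n - 1) := by
    have step1 : ∀ i : Fin n,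
        (∑ j : Fin n, if i.val = 0 ∧ j.val = n - 1 then σ * (c i * c j) else 0)
        = if i.val = 0 then σ * (c i * d (n - 1)) else 0 := by
      intro i
      by_cases hi : i.val = 0
      · rw [if_pos hi]
        have hcong : ∀ j : Fin n, (if i.val = 0 ∧ j.val = n - 1 then σ * (c i * c j) else 0)
            = if j.val = n - 1 then (fun j => σ * (c i * c j)) j else 0 := by
          intro j
          rw [ite_and, if_pos hi]
        rw [Finset.sum_congr rfl (fun j _ => hcong j)]
        rw [sum_ite_coe_eq (n - 1) (fun j => σ * (c i * c j))]
        rw [dif_pos (by omega : n - 1 < n), hd (n - 1) (by omega)]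
      · rw [if_neg hi]
        apply Finset.sum_eq_zero
        intro j _
        rw [if_neg (by tauto)]
    rw [Finset.sum_congr rfl (fun i _ => step1 i)]
    rw [sum_ite_coe_eq 0 (fun i => σ * (c i * d (n - 1)))]
    rw [dif_pos (by omega : 0 < n), ← hd 0 (by omega)]
    ring
  have hupsum : (∑ i, ∑ j : Fin n, if i.val < j.val then c i * c j * G i j else 0)
      = (∑ k ∈ Finset.range (n - 1), d k * d (k + 1)) + σ * d 0 * d (n - 1) := by
    rw [← hA, ← hB, ← Finset.sum_add_distrib]
    apply Finset.sum_congr rfl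
    intro i _
    rw [← Finset.sum_add_distrib]
    exact Finset.sum_congr rfl fun j _ => hup i j
  rw [hT, hdiag, hlow, hupsum]
  ring

end AuxLemmas

/-- The pairing on `ℤ^n` given by `-I_n` (so `e_i · e_j = -δ_{ij}`). -/
def mdot {n : ℕ} (v w : Fin n → ℤ) : ℤ := -∑ i, v i * w i

/-- `v` lists a negative cyclic subset of `(ℤ^n, -I_n)`: all squares `≤ -2`;
for `n = 2`, `v_1·v_2 = 0`; for `n ≥ 3` (after cyclic reordering), consecutive
products are `1`, the wrap-around product `v_1·v_n` is `-1`, and all other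
products vanish. -/
def NegCyclic (n : ℕ) (v : Fin n → Fin n → ℤ) : Prop :=
  (∀ i, mdot (v i) (v i) ≤ -2) ∧
  ((n = 2 ∧ ∀ i j : Fin n, i ≠ j → mdot (v i) (v j) = 0) ∨
   (3 ≤ n ∧
     (∀ i j : Fin n, (i : ℕ) + 1 = (j : ℕ) → mdot (v i) (v j) = 1) ∧
     (∀ i j : Fin n, (i : ℕ) = 0 → (j : ℕ) = n - 1 → mdot (v i) (v j) = -1) ∧
     (∀ i j : Fin n, (i : ℕ) + 1 < (j : ℕ) → ¬((i : ℕ) = 0 ∧ (j : ℕ) = n - 1) →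
       mdot (v i) (v j) = 0)))

/-- `v` lists a positive cyclic subset of `(ℤ^n, -I_n)`: all squares `≤ -2` with
some square `≤ -3`; for `n = 2`, `v_1·v_2 = 2`; for `n ≥ 3` (after cyclic
reordering), consecutive products and the wrap-around product are `1`, and all
other products vanish. -/
def PosCyclic (n : ℕ) (v : Fin n → Fin n → ℤ) : Prop :=
  (∀ i, mdot (v i) (v i) ≤ -2) ∧ (∃ i, mdot (v i) (v i) ≤ -3) ∧
  ((n = 2 ∧ ∀ i j : Fin n, i ≠ j → mdot (v i) (v j) = 2) ∨
   (3 ≤ n ∧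
     (∀ i j : Fin n, (i : ℕ) + 1 = (j : ℕ) → mdot (v i) (v j) = 1) ∧
     (∀ i j : Fin n, (i : ℕ) = 0 → (j : ℕ) = n - 1 → mdot (v i) (v j) = 1) ∧
     (∀ i j : Fin n, (i : ℕ) + 1 < (j : ℕ) → ¬((i : ℕ) = 0 ∧ (j : ℕ) = n - 1) →
       mdot (v i) (v j) = 0)))

private lemma mdot_comm {n : ℕ} (v w : Fin n → ℤ) : mdot v w = mdot w v := by
  simp only [mdot, neg_inj]
  exact Finset.sum_congr rfl fun i _ => mul_comm _ _

/-- Any cyclic subset `S = {v_1,...,v_n}` of `(ℤ^n, -I_n)` (negative or positive)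
consists of `n` linearly independent vectors. -/
theorem cyclic_subset_linearIndependent (n : ℕ) (hn : 2 ≤ n)
    (v : Fin n → Fin n → ℤ) (h : NegCyclic n v ∨ PosCyclic n v) :
    LinearIndependent ℤ v := by
  classical
  rw [Fintype.linearIndependent_iff]
  intro c hc
  -- the coordinates of the dependence relation vanish
  have hcoord : ∀ k, ∑ j, c j * v j k = 0 := by
    intro k
    have := congrFun hc k
    simpa [Finset.sum_apply] using this
  -- hence dotting against each `v i` gives zero
  have he : ∀ i, ∑ j, c j * mdot (v i) (v j) = 0 := by
    intro i
    have e : ∀ j : Fin n, c j * mdot (v i) (v j) = ∑ k, -(v i k * (c j * v j k)) := by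
      intro j
      rw [mdot, mul_neg, Finset.mul_sum, ← Finset.sum_neg_distrib]
      exact Finset.sum_congr rfl fun k _ => by ring
    rw [Finset.sum_congr rfl (fun j _ => e j), Finset.sum_comm]
    apply Finset.sum_eq_zero
    intro k _
    have e2 : ∑ j, -(v i k * (c j * v j k)) = -(v i k * ∑ j, c j * v j k) := by
      rw [Finset.mul_sum, ← Finset.sum_neg_distrib]
    rw [e2, hcoord k, mul_zero, neg_zero]
  -- the Gram quadratic form vanishes at `c`
  have hT0 : ∑ i, ∑ j, c i * c j * mdot (v i) (v j) = 0 := by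
    have e : ∀ i : Fin n, ∑ j, c i * c j * mdot (v i) (v j)
        = c i * ∑ j, c j * mdot (v i) (v j) := by
      intro i
      rw [Finset.mul_sum]
      exact Finset.sum_congr rfl fun j _ => by ring
    rw [Finset.sum_congr rfl (fun i _ => e i)]
    apply Finset.sum_eq_zero
    intro i _
    rw [he i, mul_zero]
  have hsym : ∀ i j : Fin n, mdot (v i) (v j) = mdot (v j) (v i) :=
    fun i j => mdot_comm _ _
  -- general closing argument for the `n ≥ 3` cases
  have main : ∀ (σ : ℤ), σ * σ = 1 → 3 ≤ n →
      (∀ i, mdot (v i) (v i) ≤ -2) →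
      (∀ i j : Fin n, (i : ℕ) + 1 = (j : ℕ) → mdot (v i) (v j) = 1) →
      (∀ i j : Fin n, (i : ℕ) = 0 → (j : ℕ) = n - 1 → mdot (v i) (v j) = σ) →
      (∀ i j : Fin n, (i : ℕ) + 1 < (j : ℕ) → ¬((i : ℕ) = 0 ∧ (j : ℕ) = n - 1) →
        mdot (v i) (v j) = 0) →
      (∀ extra : ℤ, 0 ≤ extra →
        ((∑ i, c i * c i * mdot (v i) (v i)) ≤
          -2 * (∑ k ∈ Finset.range n, ((fun k => if h : k < n then c ⟨k, h⟩ else 0) k) ^ 2)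
          - extra) →
        ((∑ k ∈ Finset.range (n - 1),
            ((fun k => if h : k < n then c ⟨k, h⟩ else 0) k
              - (fun k => if h : k < n then c ⟨k, h⟩ else 0) (k + 1)) ^ 2)
          + ((fun k => if h : k < n then c ⟨k, h⟩ else 0) 0
              - σ * (fun k => if h : k < n then c ⟨k, h⟩ else 0) (n - 1)) ^ 2
          + extra ≤ 0)) := by
    intro σ hσ hn3 hdg h1 hcor h0 extra hex hD
    set d : ℕ → ℤ := fun k => if h : k < n then c ⟨k, h⟩ else 0 with hdd
    have hd : ∀ (k : ℕ) (h : k < n), d k = c ⟨k, h⟩ := fun k h => dif_pos h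
    have heval := double_sum_eval n hn3 c (fun i j => mdot (v i) (v j)) hsym σ d hd h1 hcor h0
    have hQ := Qid (n - 1) d σ hσ
    rw [(by omega : n - 1 + 1 = n)] at hQ
    -- 0 = D + 2R, D ≤ -2S - extra, Q = 2S - 2R  ⇒  Q + extra ≤ 0
    rw [hT0] at heval
    linarith [heval, hD, hQ]
  rcases h with ⟨hdg, hcase⟩ | ⟨hdg, hex, hcase⟩
  · -- negative cyclic
    rcases hcase with ⟨hn2, hzero⟩ | ⟨hn3, h1, hcor, h0⟩
    · -- n = 2
      subst hn2
      have e0 := he 0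
      have e1 := he 1
      rw [Fin.sum_univ_two] at e0 e1
      rw [hzero 0 1 (by decide)] at e0
      rw [hzero 1 0 (by decide)] at e1
      have d0 := hdg 0
      have d1 := hdg 1
      have hc0 : c 0 = 0 := by
        have h00 : c 0 * mdot (v 0) (v 0) = 0 := by linarith
        exact (mul_eq_zero.mp h00).resolve_right (by omega)
      have hc1 : c 1 = 0 := by
        have h11 : c 1 * mdot (v 1) (v 1) = 0 := by linarith
        exact (mul_eq_zero.mp h11).resolve_right (by omega)
      intro i
      fin_cases i <;> assumption
    · -- n ≥ 3, corner sign -1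
      set d : ℕ → ℤ := fun k => if h : k < n then c ⟨k, h⟩ else 0 with hdd
      have hd : ∀ (k : ℕ) (h : k < n), d k = c ⟨k, h⟩ := fun k h => dif_pos h
      have hDle : (∑ i, c i * c i * mdot (v i) (v i))
          ≤ -2 * (∑ k ∈ Finset.range n, (d k) ^ 2) - 0 := by
        have hS : ∑ i : Fin n, c i * c i * (-2)
            = -2 * ∑ k ∈ Finset.range n, (d k) ^ 2 := by
          rw [← Fin.sum_univ_eq_sum_range (fun k => (d k) ^ 2) n, Finset.mul_sum]
          apply Finset.sum_congr rfl
          intro i _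
          rw [hd i.val i.isLt, Fin.eta]
          ring
        have := Finset.sum_le_sum (s := Finset.univ)
          (fun (i : Fin n) _ => mul_le_mul_of_nonneg_left (hdg i) (mul_self_nonneg (c i)))
        rw [hS] at this
        linarith
      have key := main (-1) (by norm_num) hn3 hdg h1 hcor h0 0 le_rfl hDle
      have hsum0 : (∑ k ∈ Finset.range (n - 1), (d k - d (k + 1)) ^ 2) = 0 := by
        have hs1 : 0 ≤ ∑ k ∈ Finset.range (n - 1), (d k - d (k + 1)) ^ 2 :=
          Finset.sum_nonneg fun k _ => sq_nonneg _
        linarith [sq_nonneg (d 0 - (-1) * d (n - 1)), key]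
      have hcor0 : (d 0 - (-1) * d (n - 1)) ^ 2 = 0 := by
        have hs1 : 0 ≤ ∑ k ∈ Finset.range (n - 1), (d k - d (k + 1)) ^ 2 :=
          Finset.sum_nonneg fun k _ => sq_nonneg _
        linarith [sq_nonneg (d 0 - (-1) * d (n - 1)), key]
      have hdk : ∀ k < n - 1, d k = d (k + 1) := by
        intro k hk
        have := (Finset.sum_eq_zero_iff_of_nonneg
          (fun k _ => sq_nonneg (d k - d (k + 1)))).mp hsum0 k (Finset.mem_range.mpr hk)
        have h2 := sq_eq_zero_iff.mp this
        linarith [h2]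
      have hconst := const_of_diffs (n - 1) d hdk
      have hdn1 : d (n - 1) = d 0 := hconst (n - 1) le_rfl
      have hd00 : d 0 = 0 := by
        have h2 := sq_eq_zero_iff.mp hcor0
        linarith
      intro i
      have : d i.val = 0 := by
        rw [hconst i.val (by have := i.isLt; omega), hd00]
      rw [hd i.val i.isLt, Fin.eta] at this
      exact this
  · -- positive cyclic
    rcases hcase with ⟨hn2, htwo⟩ | ⟨hn3, h1, hcor, h0⟩
    · -- n = 2
      subst hn2
      have e0 := he 0
      have e1 := he 1
      rw [Fin.sum_univ_two] at e0 e1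
      rw [htwo 0 1 (by decide)] at e0
      rw [htwo 1 0 (by decide)] at e1
      have d0 := hdg 0
      have d1 := hdg 1
      have hquad : c 0 * c 0 * mdot (v 0) (v 0) + c 1 * c 1 * mdot (v 1) (v 1)
          + 4 * (c 0 * c 1) = 0 := by linear_combination c 0 * e0 + c 1 * e1
      have hc00 : c 0 * c 0 = 0 ∧ c 1 * c 1 = 0 := by
        rcases hex with ⟨k0, hk0⟩
        have hk01 : k0 = 0 ∨ k0 = 1 := by omega
        rcases hk01 with rfl | rfl
        · have hA : c 0 * c 0 ≤ 0 := by
            nlinarith [sq_nonneg (c 0 - c 1),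
              mul_le_mul_of_nonneg_left hk0 (mul_self_nonneg (c 0)),
              mul_le_mul_of_nonneg_left d1 (mul_self_nonneg (c 1))]
          have hB : c 1 * c 1 ≤ 0 := by
            nlinarith [sq_nonneg (2 * c 0 - c 1),
              mul_le_mul_of_nonneg_left hk0 (mul_self_nonneg (c 0)),
              mul_le_mul_of_nonneg_left d1 (mul_self_nonneg (c 1)), hA]
          exact ⟨le_antisymm hA (mul_self_nonneg _), le_antisymm hB (mul_self_nonneg _)⟩
        · have hB : c 1 * c 1 ≤ 0 := by
            nlinarith [sq_nonneg (c 0 - c 1),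
              mul_le_mul_of_nonneg_left hk0 (mul_self_nonneg (c 1)),
              mul_le_mul_of_nonneg_left d0 (mul_self_nonneg (c 0))]
          have hA : c 0 * c 0 ≤ 0 := by
            nlinarith [sq_nonneg (2 * c 1 - c 0),
              mul_le_mul_of_nonneg_left hk0 (mul_self_nonneg (c 1)),
              mul_le_mul_of_nonneg_left d0 (mul_self_nonneg (c 0)), hB]
          exact ⟨le_antisymm hA (mul_self_nonneg _), le_antisymm hB (mul_self_nonneg _)⟩
      have hc0 : c 0 = 0 := mul_self_eq_zero.mp hc00.1
      have hc1 : c 1 = 0 := mul_self_eq_zero.mp hc00.2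
      intro i
      fin_cases i <;> assumption
    · -- n ≥ 3, corner sign +1, with an extra `-3` diagonal entry
      rcases hex with ⟨k0, hk0⟩
      set d : ℕ → ℤ := fun k => if h : k < n then c ⟨k, h⟩ else 0 with hdd
      have hd : ∀ (k : ℕ) (h : k < n), d k = c ⟨k, h⟩ := fun k h => dif_pos h
      have hDle : (∑ i, c i * c i * mdot (v i) (v i))
          ≤ -2 * (∑ k ∈ Finset.range n, (d k) ^ 2) - c k0 * c k0 := by
        have step : ∀ i : Fin n, c i * c i * mdot (v i) (v i)
            ≤ c i * c i * (-2) + (if i = k0 then -(c k0 * c k0) else 0) := by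
          intro i
          by_cases hik : i = k0
          · subst hik
            rw [if_pos rfl]
            nlinarith [mul_self_nonneg (c i), hk0]
          · rw [if_neg hik]
            nlinarith [mul_self_nonneg (c i), hdg i]
        have hle := Finset.sum_le_sum (s := Finset.univ) (fun (i : Fin n) _ => step i)
        rw [Finset.sum_add_distrib] at hle
        rw [Finset.sum_ite_eq' Finset.univ k0 (fun _ => -(c k0 * c k0)),
          if_pos (Finset.mem_univ k0)] at hle
        have hS : ∑ i : Fin n, c i * c i * (-2)
            = -2 * ∑ k ∈ Finset.range n, (d k) ^ 2 := by
          rw [← Fin.sum_univ_eq_sum_range (fun k => (d k) ^ 2) n, Finset.mul_sum]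
          apply Finset.sum_congr rfl
          intro i _
          rw [hd i.val i.isLt, Fin.eta]
          ring
        rw [hS] at hle
        linarith
      have key := main 1 (by norm_num) hn3 hdg h1 hcor h0 (c k0 * c k0)
        (mul_self_nonneg _) hDle
      have hsum0 : (∑ k ∈ Finset.range (n - 1), (d k - d (k + 1)) ^ 2) = 0 := by
        have hs1 : 0 ≤ ∑ k ∈ Finset.range (n - 1), (d k - d (k + 1)) ^ 2 :=
          Finset.sum_nonneg fun k _ => sq_nonneg _
        linarith [sq_nonneg (d 0 - 1 * d (n - 1)), mul_self_nonneg (c k0), key]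
      have hck0 : c k0 = 0 := by
        have hs1 : 0 ≤ ∑ k ∈ Finset.range (n - 1), (d k - d (k + 1)) ^ 2 :=
          Finset.sum_nonneg fun k _ => sq_nonneg _
        have : c k0 * c k0 = 0 := by
          linarith [sq_nonneg (d 0 - 1 * d (n - 1)), mul_self_nonneg (c k0), key]
        exact mul_self_eq_zero.mp this
      have hdk : ∀ k < n - 1, d k = d (k + 1) := by
        intro k hk
        have := (Finset.sum_eq_zero_iff_of_nonneg
          (fun k _ => sq_nonneg (d k - d (k + 1)))).mp hsum0 k (Finset.mem_range.mpr hk)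
        have h2 := sq_eq_zero_iff.mp this
        linarith [h2]
      have hconst := const_of_diffs (n - 1) d hdk
      have hd00 : d 0 = 0 := by
        have h1' : d k0.val = d 0 := hconst k0.val (by have := k0.isLt; omega)
        rw [hd k0.val k0.isLt, Fin.eta] at h1'
        rw [← h1', hck0]
      intro i
      have : d i.val = 0 := by
        rw [hconst i.val (by have := i.isLt; omega), hd00]
      rw [hd i.val i.isLt, Fin.eta] at this
      exact this
end

section
/- Let (b_1,...,b_k) and (c_1,...,c_l) be linear-dual strings and let a = (b_1+3, b_2,...,b_k, 2, c_l,...,c_1). Then a belongs to the family S_{2c} (i.e., a is, up to cyclic reordering and reversal, of the form (3+x_1, 2^{[x_2]},..., 3+x_{2k+1}, 2^{[x_1]}, 3+x_2, 2^{[x_3]},..., 3+x_{2k}, 2^{[x_{2k+1}]}) with all x_i ≥ 0) if and only if (b_1+1, b_2,...,b_k) is a palindrome. -/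
/-- Equivalence of strings up to cyclic reordering and reversal. -/
def cycEquiv (a b : List ℕ) : Prop :=
  ∃ m, a.rotate m = b ∨ (a.rotate m).reverse = b

/-- The string `(3+x_1, 2^{[x_2]}, 3+x_3, 2^{[x_4]}, ..., 3+x_{2k+1}, 2^{[x_1]},
3+x_2, 2^{[x_3]}, ..., 3+x_{2k}, 2^{[x_{2k+1}]})`, with the parameters indexed
cyclically by `ZMod (2k+1)`: the `j`-th block is `(3 + x_{1+2j}, 2^{[x_{2+2j}]})`. -/
def s2cStr (k : ℕ) (x : ZMod (2 * k + 1) → ℕ) : List ℕ :=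
  (List.range (2 * k + 1)).flatMap fun j =>
    (3 + x (1 + 2 * (j : ZMod (2 * k + 1)))) ::
      List.replicate (x (2 + 2 * (j : ZMod (2 * k + 1)))) 2

/-- Membership in the family `S_{2c}`, up to cyclic reordering and reversal. -/
def InS2c (a : List ℕ) : Prop := ∃ k x, cycEquiv a (s2cStr k x)

/-
Write a string with entries `≥ 2` as `ofRuns [g₀, v₁, g₁, …, v_m, g_m]`, alternating runs of
2's with entries `3 + vᵢ`. A string of `S_{2c}` is, up to rotation, `ofRuns (0 :: (h ++ h))`
with `h = (x_1, …, x_{2k+1})`, and the reverse of such a string is again one of them up to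
rotation. Cutting a rotation at an entry `≥ 3` cuts the parameter list at an even position, so a
string `ofRuns (0 :: Q)` lies in `S_{2c}` iff `Q = h ++ h` with `h` of odd length.

Linear duality is generated from `[2] ↔ [2]` by `(b, x :: c) ↦ (2 :: b, (x + 1) :: c)` and its
mirror image; this gives the dual of `b = (2 + e, ofRuns W, 2 + n)` as
`(2^[e], ofRuns (0 :: W ++ [n]))`. For `n ≥ 1` the string `a` is then `ofRuns (0 :: Q)` with
`Q = (2 + e, W, n - 1) ++ (n + 1, W.reverse, e)`, a square exactly when `e + 1 = n` and `W` is a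
palindrome, which is the palindrome condition on `(b_1 + 1, b_2, …, b_k)`. For `n = 0` both sides
fail: `a` has an even number of entries `≥ 3`, whereas strings of `S_{2c}` have `2k + 1`.
-/

theorem List.replicate_append_cons_inj {α : Type*} {a x y : α} {g g' : ℕ} {X Y : List α}
    (hx : x ≠ a) (hy : y ≠ a) (h : List.replicate g a ++ x :: X = List.replicate g' a ++ y :: Y) :
    g = g' ∧ x = y ∧ X = Y := by
  induction g generalizing g' with
  | zero => cases g' <;> simp_all [List.replicate_succ, eq_comm]
  | succ g ih => cases g' <;> simp_all [List.replicate_succ]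

theorem List.IsRotated.exists_append {α : Type*} {l l' : List α} (h : l ~r l') :
    ∃ u v, l = u ++ v ∧ l' = v ++ u := by
  obtain ⟨n, hn, rfl⟩ := List.isRotated_iff_mod.1 h
  exact ⟨l.take n, l.drop n, (List.take_append_drop n l).symm, List.rotate_eq_drop_append_take hn⟩

theorem List.exists_append_self_of_append_eq_append_self {α : Type*} {u v h : List α}
    (huv : u ++ v = h ++ h) : ∃ h', h'.length = h.length ∧ v ++ u = h' ++ h' := by
  rcases List.append_eq_append_iff.1 huv with ⟨a, rfl, rfl⟩ | ⟨c, rfl, rfl⟩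
  · exact ⟨a ++ u, by simp [Nat.add_comm], by simp⟩
  · exact ⟨v ++ c, by simp [Nat.add_comm], by simp⟩

theorem List.exists_odd_append_self_iff {α : Type*} {u v : List α} (hlen : u.length = v.length)
    (hu : Odd u.length) : (∃ h, Odd h.length ∧ u ++ v = h ++ h) ↔ u = v := by
  constructor
  · rintro ⟨h, -, huv⟩
    have hh : u.length = h.length := by
      have := congrArg List.length huv
      simp only [List.length_append] at this
      omega
    obtain ⟨rfl, rfl⟩ := List.append_inj huv hh
    rfl
  · rintro rfl
    exact ⟨u, hu, rfl⟩

theorem List.cons_append_singleton_reverse_eq_iff {α : Type*} (x y : α) (l : List α) :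
    (x :: (l ++ [y])).reverse = x :: (l ++ [y]) ↔ x = y ∧ l.reverse = l := by
  rw [List.reverse_cons, List.reverse_append, List.reverse_singleton, List.singleton_append,
    List.cons_append, List.cons.injEq]
  constructor
  · rintro ⟨rfl, h⟩
    exact ⟨rfl, List.append_cancel_right h⟩
  · rintro ⟨rfl, h⟩
    rw [h]
    exact ⟨rfl, rfl⟩

/-- `ofRuns [g₀, v₁, g₁, …, v_m, g_m] = (2^[g₀], 3 + v₁, 2^[g₁], …, 3 + v_m, 2^[g_m])`.
On lists of odd length this is a bijection onto the strings with all entries `≥ 2`. -/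
def ofRuns : List ℕ → List ℕ
  | [] => []
  | [g] => List.replicate g 2
  | g :: v :: r => List.replicate g 2 ++ (3 + v) :: ofRuns r

namespace ofRuns

@[simp] theorem nil : ofRuns [] = [] := rfl

@[simp] theorem singleton (g : ℕ) : ofRuns [g] = List.replicate g 2 := rfl

@[simp] theorem cons_cons (g v : ℕ) (r : List ℕ) :
    ofRuns (g :: v :: r) = List.replicate g 2 ++ (3 + v) :: ofRuns r := rfl

theorem cons (g : ℕ) (r : List ℕ) : ofRuns (g :: r) = List.replicate g 2 ++ ofRuns (0 :: r) := by
  cases r <;> simp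

theorem succ_cons (g : ℕ) (r : List ℕ) : ofRuns ((g + 1) :: r) = 2 :: ofRuns (g :: r) := by
  rw [cons, cons g, List.replicate_succ, List.cons_append]

theorem exists_eq {l : List ℕ} (hl : ∀ x ∈ l, 2 ≤ x) : ∃ u, Odd u.length ∧ ofRuns u = l := by
  induction l with
  | nil => exact ⟨[0], by simp, rfl⟩
  | cons x l ih =>
    obtain ⟨u, hu, rfl⟩ := ih fun y hy => hl y (by simp [hy])
    obtain ⟨d, rfl⟩ : ∃ d, x = 2 + d := ⟨x - 2, by have := hl x (by simp); omega⟩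
    cases d with
    | zero =>
      obtain ⟨g, r, rfl⟩ := List.exists_cons_of_length_pos hu.pos
      exact ⟨(g + 1) :: r, by simpa using hu, by rw [succ_cons]⟩
    | succ d => exact ⟨0 :: d :: u, by simpa [Nat.odd_add_one] using hu, by simp; omega⟩

theorem injOn : Set.InjOn ofRuns {u | Odd u.length} := by
  intro u hu v hv h
  induction u using ofRuns.induct generalizing v with
  | case1 => simp at hu
  | case2 g =>
    match v, hv with
    | [], hv => simp at hv
    | [g'], _ => simpa using congrArg List.length h
    | g' :: y :: r, _ =>
      have : 3 + y ∈ ofRuns [g] := by simp [h]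
      simp at this; omega
  | case3 g x r ih =>
    match v, hv with
    | [], hv => simp at hv
    | [g'], _ =>
      have : 3 + x ∈ ofRuns [g'] := by simp [← h]
      simp at this; omega
    | g' :: y :: r', hv =>
      obtain ⟨rfl, hxy, hr⟩ := List.replicate_append_cons_inj (by omega) (by omega) h
      simp only [Set.mem_ofPred_eq, List.length_cons, Nat.odd_add_one, not_not] at hu hv
      rw [ih hu hv hr, show x = y by omega]

theorem append {u : List ℕ} (hu : Even u.length) (v : List ℕ) :
    ofRuns (u ++ v) = ofRuns u ++ ofRuns v := by
  induction u using ofRuns.induct with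
  | case1 => rfl
  | case2 g => simp at hu
  | case3 g w r ih => simp [ih (by simpa [Nat.even_add_one] using hu)]

theorem append_singleton {u : List ℕ} (hu : Odd u.length) (v : ℕ) :
    ofRuns (u ++ [v]) = ofRuns u ++ [3 + v] := by
  induction u using ofRuns.induct with
  | case1 => simp at hu
  | case2 g => simp
  | case3 g w r ih => simp [ih (by simpa [Nat.odd_add_one] using hu)]

theorem zero_cons_append {u : List ℕ} (hu : Even u.length) (v : List ℕ) :
    ofRuns (0 :: (u ++ v)) = ofRuns (0 :: u) ++ ofRuns (0 :: v) := by
  match u with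
  | [] => simp
  | [_] => simp at hu
  | x :: g :: u =>
    rw [List.cons_append, List.cons_append, cons_cons, cons_cons, cons g, cons g,
      zero_cons_append (u := u) (by simpa [Nat.even_add_one] using hu)]
    simp

theorem reverse {u : List ℕ} (hu : Odd u.length) : (ofRuns u).reverse = ofRuns u.reverse := by
  induction u using ofRuns.induct with
  | case1 => simp at hu
  | case2 g => simp
  | case3 g v r ih =>
    have hr : Odd r.length := by simpa [Nat.odd_add_one] using hu
    have hrv : Even (r.reverse ++ [v]).length := by simpa [Nat.even_add_one] using hr
    have : (g :: v :: r).reverse = (r.reverse ++ [v]) ++ [g] := by simp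
    rw [this, append hrv, append_singleton (by simpa using hr)]
    simp [ih hr]

theorem reverse_eq_self_iff {u : List ℕ} (hu : Odd u.length) :
    (ofRuns u).reverse = ofRuns u ↔ u.reverse = u := by
  rw [reverse hu]
  exact injOn.eq_iff (by simpa using hu) hu

theorem countP_three_le (u : List ℕ) : (ofRuns u).countP (3 ≤ ·) = u.length / 2 := by
  induction u using ofRuns.induct with
  | case1 => simp
  | case2 g => simp [List.countP_replicate]
  | case3 g v r ih => simp [List.countP_replicate, ih]; omega

theorem eq_append_of_zero_cons {Z x y : List ℕ} {t : ℕ} (hZ : Even Z.length)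
    (h : ofRuns (0 :: Z) = x ++ t :: y) (ht : 3 ≤ t) :
    ∃ Z₁ Z₂, Even Z₁.length ∧ Z = Z₁ ++ Z₂ ∧ x = ofRuns (0 :: Z₁) := by
  match Z, x with
  | [], x => simp at h
  | [_], _ => simp at hZ
  | v :: g :: Z, [] => exact ⟨[], v :: g :: Z, by simp, rfl, rfl⟩
  | v :: g :: Z, x₀ :: x =>
    rw [cons_cons, cons g, List.replicate_zero, List.nil_append, List.cons_append,
      List.cons.injEq] at h
    obtain ⟨rfl, h⟩ := h
    -- `t ≥ 3` cannot lie inside the run `2^[g]`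
    obtain ⟨c, rfl, hc⟩ : ∃ c, x = List.replicate g 2 ++ c ∧ ofRuns (0 :: Z) = c ++ t :: y := by
      rcases List.append_eq_append_iff.1 h with hc | ⟨b, hg, hb⟩
      · exact hc
      · cases b with
        | nil => exact ⟨[], by simpa using hg.symm, by simpa using hb.symm⟩
        | cons b₀ b =>
          have : t ∈ List.replicate g 2 := by simp [hg, (List.cons.inj hb).1]
          simp at this; omega
    obtain ⟨Z₁, Z₂, hZ₁, rfl, rfl⟩ :=
      eq_append_of_zero_cons (Z := Z) (by simpa [Nat.even_add_one] using hZ) hc ht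
    exact ⟨v :: g :: Z₁, Z₂, by simpa [Nat.even_add_one] using hZ₁, rfl, by simp [cons g]⟩

theorem eq_zero_cons_append_of_isRotated {Z y : List ℕ} {t : ℕ} (hZ : Even Z.length)
    (h : ofRuns (0 :: Z) ~r t :: y) (ht : 3 ≤ t) :
    ∃ Z₁ Z₂, Z = Z₁ ++ Z₂ ∧ t :: y = ofRuns (0 :: (Z₂ ++ Z₁)) := by
  obtain ⟨u, v, huv, hvu⟩ := h.exists_append
  cases v with
  | nil => exact ⟨[], Z, rfl, by simpa [hvu] using huv.symm⟩
  | cons t' v =>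
    obtain ⟨rfl, rfl⟩ := List.cons.inj hvu
    obtain ⟨Z₁, Z₂, hZ₁, rfl, rfl⟩ := eq_append_of_zero_cons hZ huv ht
    have hZ₂ : Even Z₂.length := by simpa [List.length_append, Nat.even_add, hZ₁] using hZ
    rw [zero_cons_append hZ₁, List.append_cancel_left_eq] at huv
    exact ⟨Z₁, Z₂, rfl, by rw [zero_cons_append hZ₂, huv]; rfl⟩

theorem reverse_zero_cons_isRotated {X : List ℕ} (hX : Odd X.length) (g : ℕ) :
    (ofRuns (0 :: (X ++ [g]))).reverse ~r ofRuns (0 :: (X.reverse ++ [g])) := by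
  have hX' : Even (0 :: X.reverse).length := by simpa [Nat.even_add_one] using hX
  calc (ofRuns (0 :: (X ++ [g]))).reverse
      = List.replicate g 2 ++ ofRuns (0 :: X.reverse) := by
        rw [reverse (by simpa [Nat.odd_add_one] using hX), List.reverse_cons, List.reverse_append,
          List.reverse_singleton, List.singleton_append, List.cons_append, cons g,
          ← List.cons_append, append hX', singleton, List.replicate_zero, List.append_nil]
    _ ~r ofRuns (0 :: X.reverse) ++ List.replicate g 2 := List.isRotated_append
    _ = ofRuns (0 :: (X.reverse ++ [g])) := by
        rw [← List.cons_append, append hX', singleton]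

theorem zero_cons_map_range (N : ℕ) (F : ℕ → ℕ) :
    ofRuns (0 :: (List.range (2 * N)).map F) =
      (List.range N).flatMap fun j => (3 + F (2 * j)) :: List.replicate (F (2 * j + 1)) 2 := by
  induction N with
  | zero => simp
  | succ N ih =>
    rw [show 2 * (N + 1) = 2 * N + 1 + 1 by ring, List.range_succ, List.range_succ,
      List.map_append, List.map_append, List.append_assoc, zero_cons_append (by simp), ih,
      List.range_succ, List.flatMap_append]
    simp

end ofRuns

/-- The blocks `(3 + x_{1+2j}, 2^[x_{2+2j}])`, `j = 0, …, 2k`, read off the parameters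
`x_1, …, x_{2k+1}` twice in a row. -/
theorem s2cStr_eq_ofRuns (k : ℕ) (x : ZMod (2 * k + 1) → ℕ) :
    s2cStr k x = ofRuns (0 :: ((List.range (2 * k + 1)).map (fun t : ℕ => x (1 + t)) ++
      (List.range (2 * k + 1)).map (fun t : ℕ => x (1 + t)))) := by
  have hdouble : (List.range (2 * (2 * k + 1))).map (fun t : ℕ => x (1 + t)) =
      (List.range (2 * k + 1)).map (fun t : ℕ => x (1 + t)) ++
        (List.range (2 * k + 1)).map (fun t : ℕ => x (1 + t)) := by
    rw [show 2 * (2 * k + 1) = (2 * k + 1) + (2 * k + 1) from two_mul _, List.range_add,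
      List.map_append, List.map_map]
    congr 2
    ext t
    simp
  rw [← hdouble, ofRuns.zero_cons_map_range, s2cStr]
  simp only [List.pure_def, List.bind_eq_flatMap, List.flatMap_assoc, List.flatMap_singleton]
  refine List.flatMap_congr fun j _ => ?_
  push_cast
  ring_nf

theorem exists_s2cStr_eq {h : List ℕ} (hh : Odd h.length) :
    ∃ k x, s2cStr k x = ofRuns (0 :: (h ++ h)) := by
  obtain ⟨k, hk⟩ := hh
  refine ⟨k, fun i => h.getD (i - 1).val 0, ?_⟩
  have : (List.range (2 * k + 1)).map (fun t : ℕ => h.getD ((1 + t : ZMod (2 * k + 1)) - 1).val 0)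
      = h := by
    apply List.ext_getElem (by simp [hk])
    intro i hi _
    simp only [List.getElem_map, List.getElem_range, add_sub_cancel_left, ZMod.val_natCast]
    rw [Nat.mod_eq_of_lt (by simpa using hi), List.getD_eq_getElem]
  rw [s2cStr_eq_ofRuns, this]

theorem exists_isRotated_reverse_ofRuns_zero_cons_append_self {h : List ℕ} (hh : Odd h.length) :
    ∃ h', Odd h'.length ∧ ofRuns (0 :: (h' ++ h')) ~r (ofRuns (0 :: (h ++ h))).reverse := by
  rcases List.eq_nil_or_concat h with rfl | ⟨h₀, g, rfl⟩
  · simp at hh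
  rw [List.concat_eq_append] at hh ⊢
  have hX : Odd (h₀ ++ [g] ++ h₀).length := by simp
  refine ⟨h₀.reverse ++ [g], by simpa using hh, ?_⟩
  convert (ofRuns.reverse_zero_cons_isRotated hX g).symm using 3 <;> simp

theorem inS2c_iff_isRotated {a : List ℕ} :
    InS2c a ↔ ∃ h, Odd h.length ∧ ofRuns (0 :: (h ++ h)) ~r a := by
  constructor
  · rintro ⟨k, x, m, hm | hm⟩ <;> rw [s2cStr_eq_ofRuns] at hm
    · exact ⟨_, by simp, hm ▸ List.IsRotated.forall a m⟩
    · obtain ⟨h', hh', hrot⟩ := exists_isRotated_reverse_ofRuns_zero_cons_append_self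
        (h := (List.range (2 * k + 1)).map (fun t : ℕ => x (1 + t))) (by simp)
      rw [← hm, List.reverse_reverse] at hrot
      exact ⟨h', hh', hrot.trans (List.IsRotated.forall a m)⟩
  · rintro ⟨h, hh, hrot⟩
    obtain ⟨k, x, hkx⟩ := exists_s2cStr_eq hh
    obtain ⟨m, hm⟩ := hrot.symm
    exact ⟨k, x, m, Or.inl (hm.trans hkx.symm)⟩

theorem inS2c_ofRuns_zero_cons_iff {Q : List ℕ} (hQ : Even Q.length) (hQ0 : Q ≠ []) :
    InS2c (ofRuns (0 :: Q)) ↔ ∃ h, Odd h.length ∧ Q = h ++ h := by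
  rw [inS2c_iff_isRotated]
  constructor
  · rintro ⟨h, hh, hrot⟩
    obtain ⟨v, Q, rfl⟩ := List.exists_cons_of_ne_nil hQ0
    rw [ofRuns.cons_cons, List.replicate_zero, List.nil_append] at hrot
    obtain ⟨Z₁, Z₂, hZ, heq⟩ := ofRuns.eq_zero_cons_append_of_isRotated
      (by simp [← two_mul]) hrot (Nat.le_add_right 3 v)
    obtain ⟨h', hlen, hsq⟩ := List.exists_append_self_of_append_eq_append_self hZ.symm
    have heq' : ofRuns (0 :: v :: Q) = ofRuns (0 :: (h' ++ h')) := by simpa [hsq] using heq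
    refine ⟨h', hlen ▸ hh, ?_⟩
    simpa using ofRuns.injOn (by simpa [Nat.odd_add_one, Nat.even_add_one] using hQ)
      (by simp [← two_mul]) heq'
  · rintro ⟨h, hh, rfl⟩
    exact ⟨h, hh, List.IsRotated.refl _⟩

theorem InS2c.odd_countP {a : List ℕ} (ha : InS2c a) : Odd (a.countP (3 ≤ ·)) := by
  obtain ⟨h, hh, hrot⟩ := inS2c_iff_isRotated.1 ha
  rw [← hrot.perm.countP_eq, ofRuns.countP_three_le]
  simpa [← two_mul, Nat.mul_add_div] using hh

@[simp] theorem hj_cons (a : ℕ) (l : List ℕ) :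
    hj (a :: l) = ((a : ℤ) * (hj l).1 - (hj l).2, (hj l).1) := rfl

theorem hj_snd_nonneg_and_lt_fst {l : List ℕ} (hl : ∀ x ∈ l, 2 ≤ x) :
    0 ≤ (hj l).2 ∧ (hj l).2 < (hj l).1 := by
  induction l with
  | nil => simp [hj]
  | cons a l ih =>
    obtain ⟨h0, hlt⟩ := ih fun x hx => hl x (by simp [hx])
    have ha : (2 : ℤ) ≤ a := by exact_mod_cast hl a (by simp)
    simp only [hj_cons]
    constructor <;> nlinarith

theorem hj_injOn : Set.InjOn hj {l | ∀ x ∈ l, 2 ≤ x} := by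
  intro u hu v hv huv
  induction u generalizing v with
  | nil =>
    cases v with
    | nil => rfl
    | cons b t =>
      have := hj_snd_nonneg_and_lt_fst (l := t) fun x hx => hv x (by simp [hx])
      simp [hj] at huv; omega
  | cons a s ih =>
    cases v with
    | nil =>
      have := hj_snd_nonneg_and_lt_fst (l := s) fun x hx => hu x (by simp [hx])
      simp [hj] at huv; omega
    | cons b t =>
      have hs := hj_snd_nonneg_and_lt_fst (l := s) fun x hx => hu x (by simp [hx])
      have ht := hj_snd_nonneg_and_lt_fst (l := t) fun x hx => hv x (by simp [hx])
      simp only [hj_cons, Prod.mk.injEq] at huv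
      obtain ⟨hfst, hq⟩ := huv
      rw [hq] at hfst hs
      -- `(a - b) * p = q_s - q_t` with `0 ≤ q_s, q_t < p` forces `a = b`
      obtain rfl : a = b := by
        by_contra hab
        rcases Nat.lt_or_gt_of_ne hab with h | h
        · have : (a : ℤ) + 1 ≤ b := by exact_mod_cast h
          nlinarith
        · have : (b : ℤ) + 1 ≤ a := by exact_mod_cast h
          nlinarith
      rw [ih (fun x hx => hu x (by simp [hx])) (fun x hx => hv x (by simp [hx]))
        (Prod.ext hq (by linarith))]

namespace IsLinearDual

theorem symm {b c : List ℕ} (h : IsLinearDual b c) : IsLinearDual c b :=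
  ⟨h.2.1, h.1, h.2.2.1.symm, by linarith [h.2.2.1, h.2.2.2]⟩

theorem right_unique {b c c' : List ℕ} (h : IsLinearDual b c) (h' : IsLinearDual b c') :
    c = c' := by
  obtain ⟨-, hc, hn, hd⟩ := h
  obtain ⟨-, hc', hn', hd'⟩ := h'
  exact hj_injOn hc hc' (Prod.ext (hn.trans hn'.symm) (by unfold hjDen at hd hd'; linarith))

theorem two_cons {b c : List ℕ} {x : ℕ} (h : IsLinearDual b (x :: c)) :
    IsLinearDual (2 :: b) ((x + 1) :: c) := by
  obtain ⟨hb, hc, hn, hd⟩ := h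
  refine ⟨by simpa using hb, ?_, ?_, ?_⟩
  · have := hc x (by simp)
    simp only [List.mem_cons, forall_eq_or_imp] at hc ⊢
    exact ⟨by omega, hc.2⟩
  all_goals simp only [hjNum, hjDen, hj_cons] at hn hd ⊢; push_cast
  · linear_combination hn + hd
  · linear_combination hd

theorem replicate_append {b c : List ℕ} {x : ℕ} (h : IsLinearDual b (x :: c)) (k : ℕ) :
    IsLinearDual (List.replicate k 2 ++ b) ((x + k) :: c) := by
  induction k with
  | zero => simpa using h
  | succ k ih => simpa [List.replicate_succ, ← add_assoc] using ih.two_cons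

theorem add_cons {b c : List ℕ} {x : ℕ} (h : IsLinearDual (x :: b) c) (k : ℕ) :
    IsLinearDual ((x + k) :: b) (List.replicate k 2 ++ c) :=
  (h.symm.replicate_append k).symm

theorem add_cons_replicate_append {b c : List ℕ} (h : IsLinearDual b (2 :: c)) (e g : ℕ) :
    IsLinearDual ((2 + e) :: (List.replicate g 2 ++ b)) (List.replicate e 2 ++ (3 + g) :: c) := by
  have := h.replicate_append (g + 1)
  rw [List.replicate_succ, List.cons_append, show 2 + (g + 1) = 3 + g by omega] at this
  exact this.add_cons e

end IsLinearDual

theorem isLinearDual_singleton (n : ℕ) : IsLinearDual [2 + n] (2 :: List.replicate n 2) := by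
  have : IsLinearDual [2] [2] := ⟨by simp, by simp, rfl, rfl⟩
  simpa [← List.replicate_succ', List.replicate_succ] using this.add_cons n

theorem isLinearDual_cons_ofRuns_append (e : ℕ) {W : List ℕ} (hW : Odd W.length) (n : ℕ) :
    IsLinearDual ((2 + e) :: (ofRuns W ++ [2 + n]))
      (List.replicate e 2 ++ ofRuns (0 :: (W ++ [n]))) := by
  match W with
  | [] => simp at hW
  | [g] => simpa using (isLinearDual_singleton n).add_cons_replicate_append e g
  | g :: v :: W =>
    have := isLinearDual_cons_ofRuns_append (v + 1) (W := W)
      (by simpa [Nat.odd_add_one] using hW) n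
    rw [List.replicate_succ, List.cons_append, show 2 + (v + 1) = 3 + v by omega] at this
    simpa [ofRuns.cons v] using this.add_cons_replicate_append e g

theorem exists_eq_singleton_or_cons_ofRuns_append {b : List ℕ} (hb : b ≠ [])
    (h2 : ∀ x ∈ b, 2 ≤ x) :
    (∃ n, b = [2 + n]) ∨ ∃ e W n, Odd W.length ∧ b = (2 + e) :: (ofRuns W ++ [2 + n]) := by
  obtain ⟨x, t, rfl⟩ := List.exists_cons_of_ne_nil hb
  obtain ⟨e, rfl⟩ : ∃ e, x = 2 + e := ⟨x - 2, by have := h2 x (by simp); omega⟩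
  rcases List.eq_nil_or_concat t with rfl | ⟨t, y, rfl⟩
  · exact Or.inl ⟨e, rfl⟩
  rw [List.concat_eq_append] at h2 ⊢
  obtain ⟨W, hW, rfl⟩ := ofRuns.exists_eq (l := t) fun z hz => h2 z (by simp [hz])
  obtain ⟨n, rfl⟩ : ∃ n, y = 2 + n := ⟨y - 2, by have := h2 y (by simp); omega⟩
  exact Or.inr ⟨e, W, n, hW, rfl⟩

def s2aStr (b c : List ℕ) : List ℕ := (b.headI + 3) :: b.tail ++ [2] ++ c.reverse

theorem inS2c_s2aStr_singleton (n : ℕ) : InS2c (s2aStr [2 + n] (2 :: List.replicate n 2)) := by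
  have ha : s2aStr [2 + n] (2 :: List.replicate n 2) = ofRuns (0 :: ([n + 2] ++ [n + 2])) := by
    simp only [s2aStr, List.headI_cons, List.tail_cons, List.cons_append, List.nil_append,
      List.reverse_cons, List.reverse_replicate, ofRuns.cons_cons, ofRuns.singleton,
      List.replicate_zero]
    rw [List.replicate_succ, ← List.replicate_succ', show 2 + n + 3 = 3 + (n + 2) by omega]
  rw [ha]
  exact (inS2c_ofRuns_zero_cons_iff (by simp) (by simp)).2 ⟨[n + 2], by simp, rfl⟩

theorem s2aStr_cons_ofRuns_append {W : List ℕ} (hW : Odd W.length) (e n : ℕ) :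
    s2aStr ((2 + e) :: (ofRuns W ++ [2 + n])) (List.replicate e 2 ++ ofRuns (0 :: (W ++ [n]))) =
      (2 + e + 3) :: (ofRuns W ++ [2 + n]) ++ [2] ++ ofRuns (n :: (W.reverse ++ [e])) := by
  have hnW : Even (n :: W.reverse).length := by simpa [Nat.even_add_one] using hW
  have hrev : (0 :: (W ++ [n])).reverse = (n :: W.reverse) ++ [0] := by simp
  rw [s2aStr, List.headI_cons, List.tail_cons, List.reverse_append,
    ofRuns.reverse (by simpa [Nat.odd_add_one] using hW), hrev, ofRuns.append hnW,
    show n :: (W.reverse ++ [e]) = (n :: W.reverse) ++ [e] from rfl, ofRuns.append hnW]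
  simp

theorem not_inS2c_s2aStr_cons_ofRuns_append_two {W : List ℕ} (hW : Odd W.length) (e : ℕ) :
    ¬InS2c (s2aStr ((2 + e) :: (ofRuns W ++ [2]))
      (List.replicate e 2 ++ ofRuns (0 :: (W ++ [0])))) := by
  intro ha
  have hcount := ha.odd_countP
  have heq := s2aStr_cons_ofRuns_append hW e 0
  rw [Nat.add_zero] at heq
  rw [heq] at hcount
  simp only [List.countP_append, List.countP_cons, ofRuns.countP_three_le] at hcount
  obtain ⟨k, hk⟩ := hW
  simp [hk, Nat.odd_iff] at hcount
  omega

theorem inS2c_s2aStr_cons_ofRuns_append_succ_iff {W : List ℕ} (hW : Odd W.length) (e n : ℕ) :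
    InS2c (s2aStr ((2 + e) :: (ofRuns W ++ [2 + (n + 1)]))
      (List.replicate e 2 ++ ofRuns (0 :: (W ++ [n + 1])))) ↔ e = n ∧ W.reverse = W := by
  have ha : (2 + e + 3) :: (ofRuns W ++ [2 + (n + 1)]) ++ [2] ++
      ofRuns ((n + 1) :: (W.reverse ++ [e])) =
        ofRuns (0 :: (((2 + e) :: (W ++ [n])) ++ ((n + 2) :: (W.reverse ++ [e])))) := by
    simp only [List.cons_append, List.append_assoc, ofRuns.cons_cons, List.replicate_zero,
      List.nil_append]
    rw [show W ++ n :: (n + 2) :: (W.reverse ++ [e]) =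
        (W ++ [n]) ++ (n + 2) :: (W.reverse ++ [e]) by simp,
      ofRuns.append (by simpa [Nat.even_add_one] using hW), ofRuns.append_singleton hW]
    simp [ofRuns.succ_cons]
    omega
  rw [s2aStr_cons_ofRuns_append hW, ha,
    inS2c_ofRuns_zero_cons_iff (by simp [Nat.even_add_one, Nat.odd_add]) (by simp),
    List.exists_odd_append_self_iff (by simp) (by simpa [Nat.odd_add_one] using hW),
    List.cons_eq_cons]
  constructor
  · rintro ⟨hen, hW'⟩
    exact ⟨by omega, (List.append_inj' hW' rfl).1.symm⟩
  · rintro ⟨rfl, hW'⟩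
    exact ⟨by omega, by rw [hW']⟩

/-- Let `(b_1,...,b_k)` and `(c_1,...,c_l)` be linear-dual strings and let
`a = (b_1+3, b_2,...,b_k, 2, c_l,...,c_1)`.  Then `a ∈ S_{2c}` if and only if
`(b_1+1, b_2,...,b_k)` is a palindrome. -/
theorem s2a_mem_s2c_iff_palindrome (b c : List ℕ) (h : IsLinearDual b c)
    (hb : b ≠ []) :
    InS2c ((b.headI + 3) :: b.tail ++ [2] ++ c.reverse) ↔
      ((b.headI + 1) :: b.tail).reverse = (b.headI + 1) :: b.tail := by
  change InS2c (s2aStr b c) ↔ _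
  rcases exists_eq_singleton_or_cons_ofRuns_append hb h.1 with ⟨n, rfl⟩ | ⟨e, W, n, hW, rfl⟩
  · rw [h.right_unique (isLinearDual_singleton n)]
    exact iff_of_true (inS2c_s2aStr_singleton n) rfl
  · rw [h.right_unique (isLinearDual_cons_ofRuns_append e hW n)]
    simp only [List.headI_cons, List.tail_cons, List.cons_append_singleton_reverse_eq_iff,
      ofRuns.reverse_eq_self_iff hW]
    cases n with
    | zero => exact iff_of_false (not_inS2c_s2aStr_cons_ofRuns_append_two hW e) (by omega)
    | succ n => rw [inS2c_s2aStr_cons_ofRuns_append_succ_iff hW]; exact Iff.and (by omega) Iff.rfl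
end
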